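/- Let P and Q be permutations of {1,...,n} such that P∘Q is an n-cycle. For braid words β with permutation P, define the Q-Gaussian parity: a classical crossing of β is even iff its chord in the chord diagram of the closure of β·β_Q is linked with an even number of other chords. Then under the classical third Reidemeister move ζ_iζ_{i+1}ζ_i → ζ_{i+1}ζ_iζ_{i+1}, the number of odd crossings (in the Q-Gaussian parity) among the three crossings on the left-hand side is even. -/

import Mathlib

set_option maxHeartbeats 1000000

namespace OneTermBracket

/-- Letters (generators) of free braid words on `n` strands:
`zeta i` is a classical crossing, `tau i` a virtual crossing, `1 ≤ i+1 ≤ n-1`. -/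
inductive Letter (n : ℕ) where
  | zeta (i : Fin (n-1))
  | tau  (i : Fin (n-1))
deriving DecidableEq

namespace Letter

def idx {n : ℕ} : Letter n → Fin (n-1)
  | zeta i => i
  | tau i => i

def isZeta {n : ℕ} : Letter n → Bool
  | zeta _ => true
  | tau _ => false

end Letter

def lo {n : ℕ} (i : Fin (n-1)) : Fin n := ⟨i.1, by have := i.2; omega⟩
def hi {n : ℕ} (i : Fin (n-1)) : Fin n := ⟨i.1 + 1, by have := i.2; omega⟩

/-- The transposition `(i, i+1)` of `{1, …, n}`. -/
def sPerm {n : ℕ} (i : Fin (n-1)) : Equiv.Perm (Fin n) := Equiv.swap (lo i) (hi i)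

/-- Each letter acts on positions as the transposition `(i, i+1)`. -/
def transOf {n : ℕ} (g : Letter n) : Equiv.Perm (Fin n) := sPerm g.idx

/-- The permutation realized by the prefix of length `j` of a braid word,
mapping the top label of a strand to its position at level `j`. -/
def prefPerm {n : ℕ} (w : List (Letter n)) (j : ℕ) : Equiv.Perm (Fin n) :=
  (((w.take j).map transOf).reverse).prod

/-- The permutation `P(β)` of a braid word (top endpoint `k` goes to bottom endpoint `P k`). -/
def permOf {n : ℕ} (w : List (Letter n)) : Equiv.Perm (Fin n) :=
  ((w.map transOf).reverse).prod

/-- The unordered pair of (top labels of the) strands crossing at position `j` of `w`. -/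
def strandsAt {n : ℕ} (w : List (Letter n)) (j : ℕ) : Option (Sym2 (Fin n)) :=
  (w[j]?).map fun g => s((prefPerm w j)⁻¹ (lo g.idx), (prefPerm w j)⁻¹ (hi g.idx))

/-- Component-wise parity determined by a partition `{1,…,n} = N₁ ⊔ N₂` (encoded by
`c : Fin n → Bool`): a classical crossing is odd (`1`) iff its two strands lie in
different parts. Non-classical positions get `0`. -/
def cwParity {n : ℕ} (c : Fin n → Bool) (w : List (Letter n)) (j : ℕ) : ZMod 2 :=
  match w[j]? with
  | some (.zeta i) =>
      if c ((prefPerm w j)⁻¹ (lo i)) = c ((prefPerm w j)⁻¹ (hi i)) then 0 else 1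
  | _ => 0

/-- The defining relations of `F_n` and `FB_n` which do not involve
`ζ_i² = 1` or the classical third Reidemeister move ("strong" moves). -/
inductive RelStrong (n : ℕ) : List (Letter n) → List (Letter n) → Prop
  | tt (i : Fin (n-1)) : RelStrong n [.tau i, .tau i] []
  | virt (i : Fin (n-1)) : RelStrong n [.zeta i, .tau i] [.tau i, .zeta i]
  | far_zz (i j : Fin (n-1)) (h : 2 ≤ Nat.dist i j) :
      RelStrong n [.zeta i, .zeta j] [.zeta j, .zeta i]
  | far_zt (i j : Fin (n-1)) (h : 2 ≤ Nat.dist i j) :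
      RelStrong n [.zeta i, .tau j] [.tau j, .zeta i]
  | far_tt (i j : Fin (n-1)) (h : 2 ≤ Nat.dist i j) :
      RelStrong n [.tau i, .tau j] [.tau j, .tau i]
  | r3v (i j : Fin (n-1)) (h : (j:ℕ) = (i:ℕ) + 1) :
      RelStrong n [.tau i, .tau j, .tau i] [.tau j, .tau i, .tau j]
  | semi (i j : Fin (n-1)) (h : (j:ℕ) = (i:ℕ) + 1) :
      RelStrong n [.tau i, .tau j, .zeta i] [.zeta j, .tau i, .tau j]

/-- The defining relations of `F_n`. -/
inductive RelF (n : ℕ) : List (Letter n) → List (Letter n) → Prop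
  | strong {r1 r2} : RelStrong n r1 r2 → RelF n r1 r2
  | zz (i : Fin (n-1)) : RelF n [.zeta i, .zeta i] []

/-- The defining relations of the free braid group `FB_n`. -/
inductive RelFB (n : ℕ) : List (Letter n) → List (Letter n) → Prop
  | ofF {r1 r2} : RelF n r1 r2 → RelFB n r1 r2
  | r3c (i j : Fin (n-1)) (h : (j:ℕ) = (i:ℕ) + 1) :
      RelFB n [.zeta i, .zeta j, .zeta i] [.zeta j, .zeta i, .zeta j]

/-- One application of a relation from `R` inside a word. -/
def StepOf {n : ℕ} (R : List (Letter n) → List (Letter n) → Prop)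
    (w1 w2 : List (Letter n)) : Prop :=
  ∃ A B r1 r2, R r1 r2 ∧ w1 = A ++ r1 ++ B ∧ w2 = A ++ r2 ++ B

/-- Strong equivalence: all moves of `F_n` except `ζ_i² = 1`. -/
def StrongEq {n : ℕ} (w1 w2 : List (Letter n)) : Prop :=
  Relation.EqvGen (StepOf (RelStrong n)) w1 w2

/-- Equivalence of braid words as elements of `F_n`. -/
def EqF {n : ℕ} (w1 w2 : List (Letter n)) : Prop :=
  Relation.EqvGen (StepOf (RelF n)) w1 w2

/-- Equivalence of braid words as elements of the free braid group `FB_n`. -/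
def EqFB {n : ℕ} (w1 w2 : List (Letter n)) : Prop :=
  Relation.EqvGen (StepOf (RelFB n)) w1 w2

/-- The parity axioms, for a parity `P` defined on the class `C` of braid words.
`P w j` is the parity of the crossing at position `j` of `w` (only classical
positions matter). -/
structure IsParity {n : ℕ} (C : List (Letter n) → Prop)
    (P : List (Letter n) → ℕ → ZMod 2) : Prop where
  /-- Crossings not taking part in a relation keep their parity (part before). -/
  untouched_left : ∀ A B r1 r2, RelFB n r1 r2 →
    C (A ++ r1 ++ B) → C (A ++ r2 ++ B) → ∀ j < A.length,
    P (A ++ r1 ++ B) j = P (A ++ r2 ++ B) j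
  /-- Crossings not taking part in a relation keep their parity (part after). -/
  untouched_right : ∀ A B r1 r2, RelFB n r1 r2 →
    C (A ++ r1 ++ B) → C (A ++ r2 ++ B) → ∀ j < B.length,
    P (A ++ r1 ++ B) (A.length + r1.length + j) = P (A ++ r2 ++ B) (A.length + r2.length + j)
  /-- In commutation-type relations (far commutativity, virtualization), the two
  letters keep their parities. -/
  comm : ∀ A B x y, RelFB n [x, y] [y, x] →
    C (A ++ [x, y] ++ B) → C (A ++ [y, x] ++ B) →
    P (A ++ [x, y] ++ B) A.length = P (A ++ [y, x] ++ B) (A.length + 1) ∧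
    P (A ++ [x, y] ++ B) (A.length + 1) = P (A ++ [y, x] ++ B) A.length
  /-- In a classical second Reidemeister move both crossings have the same parity. -/
  r2c : ∀ A B (i : Fin (n-1)),
    C (A ++ [.zeta i, .zeta i] ++ B) → C (A ++ B) →
    P (A ++ [.zeta i, .zeta i] ++ B) A.length
      = P (A ++ [.zeta i, .zeta i] ++ B) (A.length + 1)
  /-- In a semivirtual move, the classical crossing keeps its parity. -/
  semiv : ∀ A B (i j : Fin (n-1)), (j:ℕ) = (i:ℕ) + 1 →
    C (A ++ [.tau i, .tau j, .zeta i] ++ B) →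
    C (A ++ [.zeta j, .tau i, .tau j] ++ B) →
    P (A ++ [.tau i, .tau j, .zeta i] ++ B) (A.length + 2)
      = P (A ++ [.zeta j, .tau i, .tau j] ++ B) A.length
  /-- In a classical third Reidemeister move the number of odd crossings is even. -/
  r3_even : ∀ A B (i j : Fin (n-1)), (j:ℕ) = (i:ℕ) + 1 →
    C (A ++ [.zeta i, .zeta j, .zeta i] ++ B) →
    C (A ++ [.zeta j, .zeta i, .zeta j] ++ B) →
    P (A ++ [.zeta i, .zeta j, .zeta i] ++ B) A.length
      + P (A ++ [.zeta i, .zeta j, .zeta i] ++ B) (A.length + 1)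
      + P (A ++ [.zeta i, .zeta j, .zeta i] ++ B) (A.length + 2) = 0
  /-- In a classical third Reidemeister move, upper/middle/lower crossings on the
  left correspond to lower/middle/upper crossings on the right with equal parities. -/
  r3_corr : ∀ A B (i j : Fin (n-1)), (j:ℕ) = (i:ℕ) + 1 →
    C (A ++ [.zeta i, .zeta j, .zeta i] ++ B) →
    C (A ++ [.zeta j, .zeta i, .zeta j] ++ B) →
    P (A ++ [.zeta i, .zeta j, .zeta i] ++ B) A.length
      = P (A ++ [.zeta j, .zeta i, .zeta j] ++ B) (A.length + 2) ∧
    P (A ++ [.zeta i, .zeta j, .zeta i] ++ B) (A.length + 1)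
      = P (A ++ [.zeta j, .zeta i, .zeta j] ++ B) (A.length + 1) ∧
    P (A ++ [.zeta i, .zeta j, .zeta i] ++ B) (A.length + 2)
      = P (A ++ [.zeta j, .zeta i, .zeta j] ++ B) A.length

/-- Delete from `w` all classical letters whose parity (given by `par`) is even. -/
def deleteEven {n : ℕ} (w : List (Letter n)) (par : ℕ → ZMod 2) : List (Letter n) :=
  (List.range w.length).filterMap fun j =>
    (w[j]?).bind fun g =>
      match g with
      | .zeta i => if par j = 0 then none else some (.zeta i)
      | .tau i => some (.tau i)

/-- The one-term parity bracket: delete all even classical crossings. -/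
def bracket {n : ℕ} (P : List (Letter n) → ℕ → ZMod 2) (w : List (Letter n)) :
    List (Letter n) :=
  deleteEven w (P w)

/-- Positions of classical crossings of a word. -/
def ZetaPos {n : ℕ} (w : List (Letter n)) : Set ℕ :=
  {j | ∃ i, w[j]? = some (Letter.zeta i)}

/-- The classical crossings at positions `j1 < j2` form a bigon: they lie on the same
pair of strands, and no classical crossing between them lies on either of those strands. -/
def IsBigon {n : ℕ} (w : List (Letter n)) (j1 j2 : ℕ) : Prop :=
  j1 < j2 ∧ j1 ∈ ZetaPos w ∧ j2 ∈ ZetaPos w ∧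
  strandsAt w j1 = strandsAt w j2 ∧
  ∀ k, j1 < k → k < j2 → k ∈ ZetaPos w →
    ∀ e e', strandsAt w j1 = some e → strandsAt w k = some e' → ∀ a ∈ e, a ∉ e'

/-- Delete the letters at two given positions. -/
def delete2 {n : ℕ} (w : List (Letter n)) (j1 j2 : ℕ) : List (Letter n) :=
  (w.eraseIdx (max j1 j2)).eraseIdx (min j1 j2)

/-- One bigon reduction. -/
def BigonStep {n : ℕ} (w w' : List (Letter n)) : Prop :=
  ∃ j1 j2, IsBigon w j1 j2 ∧ w' = delete2 w j1 j2

/-- A word is irreducible if it admits no bigon reduction. -/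
def Irreducible {n : ℕ} (w : List (Letter n)) : Prop := ¬ ∃ j1 j2, IsBigon w j1 j2

/-- Number of classical letters of a word. -/
def countZeta {n : ℕ} (w : List (Letter n)) : ℕ := (w.filter Letter.isZeta).length

/-- `φ` is an isomorphism of the decorated graphs `Γ(w1) ≅ Γ(w2)`, encoded
combinatorially: a bijection of classical crossings preserving the pair of strands
through each crossing, the order of crossings along each strand, and the endpoint
structure (the permutation). -/
structure IsGammaIso {n : ℕ} (w1 w2 : List (Letter n)) (φ : ℕ → ℕ) : Prop where
  maps : ∀ j ∈ ZetaPos w1, φ j ∈ ZetaPos w2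
  inj : ∀ j ∈ ZetaPos w1, ∀ j' ∈ ZetaPos w1, φ j = φ j' → j = j'
  surj : ∀ k ∈ ZetaPos w2, ∃ j ∈ ZetaPos w1, φ j = k
  strands : ∀ j ∈ ZetaPos w1, strandsAt w2 (φ j) = strandsAt w1 j
  order : ∀ j ∈ ZetaPos w1, ∀ j' ∈ ZetaPos w1, j < j' →
    (∃ e e' a, strandsAt w1 j = some e ∧ strandsAt w1 j' = some e' ∧ a ∈ e ∧ a ∈ e') →
    φ j < φ j'
  perm : permOf w1 = permOf w2

/-! ### The groups `F_n` and `FB_n` as presented groups -/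

/-- Generators: `Sum.inl i` is the classical generator `ζ_i`,
`Sum.inr i` is the virtual generator `τ_i`. -/
abbrev GGen (n : ℕ) := Fin (n-1) ⊕ Fin (n-1)

def zg {n : ℕ} (i : Fin (n-1)) : FreeGroup (GGen n) := FreeGroup.of (Sum.inl i)
def tg {n : ℕ} (i : Fin (n-1)) : FreeGroup (GGen n) := FreeGroup.of (Sum.inr i)

/-- The relators of `F_n`. -/
def FRels (n : ℕ) : Set (FreeGroup (GGen n)) :=
  (⋃ i, {zg i * zg i}) ∪ (⋃ i, {tg i * tg i}) ∪
  (⋃ i, {zg i * tg i * (tg i * zg i)⁻¹}) ∪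
  (⋃ (i : Fin (n-1)) (j : Fin (n-1)) (_ : 2 ≤ Nat.dist i j),
    {zg i * zg j * (zg j * zg i)⁻¹, zg i * tg j * (tg j * zg i)⁻¹,
     tg i * tg j * (tg j * tg i)⁻¹}) ∪
  (⋃ (i : Fin (n-1)) (j : Fin (n-1)) (_ : (j:ℕ) = (i:ℕ) + 1),
    {tg i * tg j * tg i * (tg j * tg i * tg j)⁻¹,
     tg i * tg j * zg i * (zg j * tg i * tg j)⁻¹})

/-- The relators of `FB_n`: those of `F_n` together with the classical third
Reidemeister relation. -/
def FBRels (n : ℕ) : Set (FreeGroup (GGen n)) :=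
  FRels n ∪
  (⋃ (i : Fin (n-1)) (j : Fin (n-1)) (_ : (j:ℕ) = (i:ℕ) + 1),
    {zg i * zg j * zg i * (zg j * zg i * zg j)⁻¹})

/-- The group `F_n`. -/
abbrev FGrp (n : ℕ) := PresentedGroup (FRels n)

/-- The free braid group `FB_n`. -/
abbrev FBGrp (n : ℕ) := PresentedGroup (FBRels n)

def zF {n : ℕ} (i : Fin (n-1)) : FGrp n := PresentedGroup.of (Sum.inl i)
def tF {n : ℕ} (i : Fin (n-1)) : FGrp n := PresentedGroup.of (Sum.inr i)

/-- Evaluation of a braid word in `F_n`. -/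
def evalF {n : ℕ} (w : List (Letter n)) : FGrp n :=
  (w.map fun g => match g with
    | Letter.zeta i => zF i
    | Letter.tau i => tF i).prod

/-- For each unordered pair of strands, the mod-2 number of classical letters of `w`
at which these two strands cross (strand labels traced from the top). -/
def crossPar {n : ℕ} : List (Letter n) → Sym2 (Fin n) → ZMod 2
  | [], _ => 0
  | g :: rest, e =>
    (match g with
     | Letter.zeta i => if e = s(lo i, hi i) then (1 : ZMod 2) else 0
     | Letter.tau _ => 0) + crossPar rest (e.map (transOf g))

/-! ### Chord diagrams and the Gaussian parity -/

/-- The setoid on strands given by `SameCycle`; its classes are the orbits of `σ`,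
i.e. the components of the closure. -/
def sameCycleSetoid {n : ℕ} (σ : Equiv.Perm (Fin n)) : Setoid (Fin n) :=
  ⟨σ.SameCycle, ⟨Equiv.Perm.SameCycle.refl σ, Equiv.Perm.SameCycle.symm,
    Equiv.Perm.SameCycle.trans⟩⟩

/-- The rank of a strand in the single cycle of `σ` starting from strand `0`. -/
noncomputable def rankIn {n : ℕ} [NeZero n] (σ : Equiv.Perm (Fin n)) (a : Fin n) : ℕ :=
  ((Function.invFun (fun k : Fin n => (σ ^ (k : ℕ)) 0) a : Fin n) : ℕ)

/-- Coordinates on the core circle of the two endpoints of the chord of the classical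
crossing at position `j` (the circle traverses the strands in the cyclic order of `σ`). -/
noncomputable def chordEnds {n : ℕ} [NeZero n] (w : List (Letter n))
    (σ : Equiv.Perm (Fin n)) (j : ℕ) : ℕ × ℕ :=
  match w[j]? with
  | some (Letter.zeta i) =>
      (rankIn σ ((prefPerm w j)⁻¹ (lo i)) * w.length + j,
       rankIn σ ((prefPerm w j)⁻¹ (hi i)) * w.length + j)
  | _ => (0, 0)

/-- Two chords are linked iff the endpoints of one separate the endpoints of the
other on the core circle. -/
def LinkedChords {n : ℕ} [NeZero n] (w : List (Letter n)) (σ : Equiv.Perm (Fin n))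
    (j k : ℕ) : Prop :=
  Xor' (min (chordEnds w σ j).1 (chordEnds w σ j).2 < (chordEnds w σ k).1 ∧
        (chordEnds w σ k).1 < max (chordEnds w σ j).1 (chordEnds w σ j).2)
       (min (chordEnds w σ j).1 (chordEnds w σ j).2 < (chordEnds w σ k).2 ∧
        (chordEnds w σ k).2 < max (chordEnds w σ j).1 (chordEnds w σ j).2)

/-- The Gaussian parity of the classical crossing at position `j`: the mod-2 number
of chords linked with its chord. Even (`0`) iff linked with evenly many chords. -/
noncomputable def gaussParity {n : ℕ} [NeZero n] (w : List (Letter n))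
    (σ : Equiv.Perm (Fin n)) (j : ℕ) : ZMod 2 :=
  (Nat.card {k : ℕ // k < w.length ∧ k ∈ ZetaPos w ∧ k ≠ j ∧ LinkedChords w σ j k} : ZMod 2)

/-! On the core circle the chord of a crossing at level `m` has its endpoints at `r * L + m`,
`r` running over the ranks of its two strands. The crossings of a third Reidemeister move at levels
`p, p + 1, p + 2` pair up three strands `a, b, c` as `ab`, `ac`, `bc`, so each strand carries two
of the six endpoints, at levels with no other level in between. An endpoint of any other chord lies
at a level outside `{p, p + 1, p + 2}`, hence on the same side of both endpoints carried by a
strand; it is therefore separated by an even number of the three chords, and every other chord is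
linked with an even number of them. Linking is symmetric, so the linkings among the three chords
themselves are counted twice. -/

open Finset

theorem mul_add_lt_mul_add_iff {L r r' m m' : ℕ} (hm : m < L) (hm' : m' < L) :
    r * L + m < r' * L + m' ↔ r < r' ∨ r = r' ∧ m < m' := by
  rcases lt_trichotomy r r' with h | rfl | h
  · have : (r + 1) * L ≤ r' * L := Nat.mul_le_mul_right L h
    simp only [h, true_or, iff_true]
    nlinarith
  · simp
  · have : (r' + 1) * L ≤ r * L := Nat.mul_le_mul_right L h
    simp only [h.not_gt, h.ne', false_and, or_self, iff_false, not_lt]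
    nlinarith

theorem mul_add_ne_mul_add {L r r' m m' : ℕ} (hm : m < L) (hm' : m' < L) (h : m ≠ m') :
    r * L + m ≠ r' * L + m' := by
  intro he
  have h₁ := (mul_add_lt_mul_add_iff (r := r) (r' := r') hm hm').not
  have h₂ := (mul_add_lt_mul_add_iff (r := r') (r' := r) hm' hm).not
  omega

theorem mul_add_lt_iff_of_lt_iff {L s r k m m' : ℕ} (hk : k < L) (hm : m < L) (hm' : m' < L)
    (h : k < m ↔ k < m') : s * L + k < r * L + m ↔ s * L + k < r * L + m' := by
  rw [mul_add_lt_mul_add_iff hk hm, mul_add_lt_mul_add_iff hk hm', h]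

def Separates (x y z : ℕ) : Prop := min x y < z ∧ z < max x y

def Linked (c d : ℕ × ℕ) : Prop := Xor (Separates c.1 c.2 d.1) (Separates c.1 c.2 d.2)

theorem linked_comm {c d : ℕ × ℕ} (h11 : c.1 ≠ d.1) (h12 : c.1 ≠ d.2) (h21 : c.2 ≠ d.1)
    (h22 : c.2 ≠ d.2) : Linked c d ↔ Linked d c := by
  unfold Linked Separates Xor
  omega

theorem separates_triangle {x x' y y' u u' z : ℕ} (hx : z ≠ x) (hx' : z ≠ x') (hy : z ≠ y)
    (hy' : z ≠ y') (hu : z ≠ u) (hu' : z ≠ u') (hxx' : z < x ↔ z < x')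
    (hyy' : z < y ↔ z < y') (huu' : z < u ↔ z < u') :
    Xor (Separates x y z) (Separates x' u z) ↔ Separates y' u' z := by
  unfold Separates Xor
  omega

theorem linked_triangle_iff {L p k a b c s t : ℕ} (hp₂ : p + 2 < L) (hk : k < L) (hk₀ : k ≠ p)
    (hk₁ : k ≠ p + 1) (hk₂ : k ≠ p + 2) :
    Xor (Linked (a * L + p, b * L + p) (s * L + k, t * L + k))
        (Linked (a * L + (p + 1), c * L + (p + 1)) (s * L + k, t * L + k)) ↔
      Linked (b * L + (p + 2), c * L + (p + 2)) (s * L + k, t * L + k) := by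
  have hp₀ : p < L := by omega
  have hp₁ : p + 1 < L := by omega
  have point : ∀ r, Xor (Separates (a * L + p) (b * L + p) (r * L + k))
      (Separates (a * L + (p + 1)) (c * L + (p + 1)) (r * L + k)) ↔
        Separates (b * L + (p + 2)) (c * L + (p + 2)) (r * L + k) := fun r =>
    separates_triangle (mul_add_ne_mul_add hk hp₀ hk₀) (mul_add_ne_mul_add hk hp₁ hk₁)
      (mul_add_ne_mul_add hk hp₀ hk₀) (mul_add_ne_mul_add hk hp₂ hk₂)
      (mul_add_ne_mul_add hk hp₁ hk₁) (mul_add_ne_mul_add hk hp₂ hk₂)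
      (mul_add_lt_iff_of_lt_iff hk hp₀ hp₁ (by omega))
      (mul_add_lt_iff_of_lt_iff hk hp₀ hp₂ (by omega))
      (mul_add_lt_iff_of_lt_iff hk hp₁ hp₂ (by omega))
  have hs := point s
  have ht := point t
  unfold Linked Xor at *
  tauto

theorem ite_add_ite_add_ite_eq_zero {p q r : Prop} [Decidable p] [Decidable q] [Decidable r]
    (h : Xor p q ↔ r) :
    (if p then 1 else 0) + (if q then 1 else 0) + (if r then 1 else 0) = (0 : ZMod 2) := by
  by_cases p <;> by_cases q <;> by_cases r <;> simp_all [Xor] <;> decide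

theorem sum_sum_ite_ne_eq_zero_of_symm {α R : Type*} [DecidableEq α] [CommRing R] [CharP R 2]
    (s : Finset α) (f : α → α → R) (hf : ∀ a ∈ s, ∀ b ∈ s, a ≠ b → f a b = f b a) :
    ∑ a ∈ s, ∑ b ∈ s, (if a ≠ b then f a b else 0) = 0 := by
  rw [← sum_product' (f := fun a b => if a ≠ b then f a b else 0)]
  refine sum_involution (fun x _ => x.swap) (fun x hx => ?_) (fun x _ hfx => ?_)
    (fun x hx => by simpa [and_comm] using hx) (fun x _ => x.swap_swap)
  · obtain ⟨ha, hb⟩ := mem_product.1 hx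
    by_cases hab : x.1 = x.2
    · simp [hab]
    · simp only [Prod.fst_swap, Prod.snd_swap, if_pos hab, if_pos (Ne.symm hab),
        hf _ ha _ hb hab, CharTwo.add_self_eq_zero]
  · intro hswap
    exact hfx (if_neg (not_not.2 (congrArg Prod.fst hswap).symm))

section ChordDiagram

variable {n : ℕ} (w : List (Letter n))

theorem prefPerm_succ {j : ℕ} {g : Letter n} (hg : w[j]? = some g) :
    prefPerm w (j + 1) = transOf g * prefPerm w j := by
  simp [prefPerm, List.take_add_one, hg]

variable [NeZero n] (σ : Equiv.Perm (Fin n))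

theorem linkedChords_iff_linked (j k : ℕ) :
    LinkedChords w σ j k ↔ Linked (chordEnds w σ j) (chordEnds w σ k) :=
  Iff.rfl

theorem exists_chordEnds_eq {k : ℕ} (hk : k ∈ ZetaPos w) :
    ∃ s t, chordEnds w σ k = (s * w.length + k, t * w.length + k) := by
  obtain ⟨i, hi⟩ := hk
  exact ⟨rankIn σ ((prefPerm w k)⁻¹ (lo i)), rankIn σ ((prefPerm w k)⁻¹ (OneTermBracket.hi i)),
    by simp only [chordEnds, hi]⟩

theorem exists_chordEnds_r3 {A B : List (Letter n)} {i j : Fin (n - 1)}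
    (hij : (j : ℕ) = i + 1) (hw : w = A ++ [.zeta i, .zeta j, .zeta i] ++ B) :
    ∃ a b c, chordEnds w σ A.length = (a * w.length + A.length, b * w.length + A.length) ∧
      chordEnds w σ (A.length + 1) =
        (a * w.length + (A.length + 1), c * w.length + (A.length + 1)) ∧
      chordEnds w σ (A.length + 2) =
        (b * w.length + (A.length + 2), c * w.length + (A.length + 2)) := by
  have h₀ : w[A.length]? = some (.zeta i) := by simp [hw]
  have h₁ : w[A.length + 1]? = some (.zeta j) := by simp [hw]
  have h₂ : w[A.length + 2]? = some (.zeta i) := by simp [hw]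
  have hne : (i : ℕ) + 1 + 1 ≠ i := by omega
  refine ⟨rankIn σ ((prefPerm w A.length)⁻¹ (lo i)), rankIn σ ((prefPerm w A.length)⁻¹ (hi i)),
    rankIn σ ((prefPerm w A.length)⁻¹ (hi j)), ?_, ?_, ?_⟩ <;>
  simp [chordEnds, h₀, h₁, h₂, prefPerm_succ w h₀, prefPerm_succ w h₁, transOf, sPerm,
    Letter.idx, Equiv.swap_apply_def, lo, hi, Fin.ext_iff, hij, hne, hne.symm]

theorem linkedChords_comm {j k : ℕ} (hj : j ∈ ZetaPos w) (hk : k ∈ ZetaPos w)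
    (hjL : j < w.length) (hkL : k < w.length) (hjk : j ≠ k) :
    LinkedChords w σ j k ↔ LinkedChords w σ k j := by
  obtain ⟨s, t, hs⟩ := exists_chordEnds_eq w σ hj
  obtain ⟨s', t', hs'⟩ := exists_chordEnds_eq w σ hk
  rw [linkedChords_iff_linked, linkedChords_iff_linked, hs, hs']
  exact linked_comm (mul_add_ne_mul_add hjL hkL hjk) (mul_add_ne_mul_add hjL hkL hjk)
    (mul_add_ne_mul_add hjL hkL hjk) (mul_add_ne_mul_add hjL hkL hjk)

open Classical in
theorem gaussParity_eq_sum (j : ℕ) :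
    gaussParity w σ j = ∑ k ∈ (range w.length).filter (· ∈ ZetaPos w),
      if k ≠ j ∧ LinkedChords w σ j k then 1 else 0 := by
  rw [sum_boole, gaussParity, ← Nat.card_eq_finsetCard]
  congr 1
  refine Nat.card_congr (Equiv.subtypeEquivRight fun k => ?_)
  simp [and_assoc]

open Classical in
theorem sum_gaussParity_eq (T : Finset ℕ) (hT : ∀ j ∈ T, j < w.length ∧ j ∈ ZetaPos w) :
    ∑ j ∈ T, gaussParity w σ j = ∑ k ∈ (range w.length).filter (· ∈ ZetaPos w) \ T,
      ∑ j ∈ T, if LinkedChords w σ j k then 1 else 0 := by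
  have hsub : T ⊆ (range w.length).filter (· ∈ ZetaPos w) := fun j hj => by
    simpa using hT j hj
  have hinner : ∑ k ∈ T, ∑ j ∈ T, (if k ≠ j ∧ LinkedChords w σ j k then 1 else 0 : ZMod 2)
      = 0 := by
    simp only [ite_and]
    exact sum_sum_ite_ne_eq_zero_of_symm T _ fun k hk j hj hkj => by
      simp only [linkedChords_comm w σ (hT j hj).2 (hT k hk).2 (hT j hj).1 (hT k hk).1
        (Ne.symm hkj)]
  simp_rw [gaussParity_eq_sum]
  rw [sum_comm, ← sum_sdiff hsub, hinner, add_zero]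
  refine sum_congr rfl fun k hk => sum_congr rfl fun j hj => ?_
  have : k ≠ j := fun h => (mem_sdiff.1 hk).2 (h ▸ hj)
  simp [this]

end ChordDiagram

theorem gaussian_r3_even_general (n : ℕ) [NeZero n]
    (A B : List (Letter n)) (i j : Fin (n-1)) (hij : (j:ℕ) = (i:ℕ) + 1)
    (w : List (Letter n)) (hw : w = A ++ [.zeta i, .zeta j, .zeta i] ++ B)
    (σ : Equiv.Perm (Fin n)) :
    gaussParity w σ A.length + gaussParity w σ (A.length + 1)
      + gaussParity w σ (A.length + 2) = 0 := by
  classical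
  set T : Finset ℕ := {A.length, A.length + 1, A.length + 2}
  have hsum (f : ℕ → ZMod 2) :
      ∑ k ∈ T, f k = f A.length + f (A.length + 1) + f (A.length + 2) := by
    rw [sum_insert (by simp), sum_insert (by simp), sum_singleton, add_assoc]
  have hL : A.length + 2 < w.length := by simp [hw]
  have hT : ∀ k ∈ T, k < w.length ∧ k ∈ ZetaPos w := by
    simp [T, ZetaPos, hw]
  obtain ⟨a, b, c, h₀, h₁, h₂⟩ := exists_chordEnds_r3 w σ hij hw
  rw [← hsum, sum_gaussParity_eq w σ T hT]
  refine sum_eq_zero fun k hk => ?_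
  obtain ⟨hkL, hkZ⟩ := by simpa using (mem_sdiff.1 hk).1
  have hkT : k ∉ T := (mem_sdiff.1 hk).2
  obtain ⟨s, t, hk⟩ := exists_chordEnds_eq w σ hkZ
  rw [hsum]
  refine ite_add_ite_add_ite_eq_zero ?_
  simp only [linkedChords_iff_linked, h₀, h₁, h₂, hk]
  simp only [T, mem_insert, mem_singleton, not_or] at hkT
  exact linked_triangle_iff hL hkL hkT.1 hkT.2.1 hkT.2.2

/-- for the `Q`-Gaussian parity (defined via linking numbers of chords
in the chord diagram of the closure of `β·β_Q`, the closure being a single circle),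
the number of odd crossings among the three crossings of a classical third
Reidemeister move is even. -/
theorem gaussian_r3_even (n : ℕ) [NeZero n] (Qp : Equiv.Perm (Fin n))
    (A B : List (Letter n)) (i j : Fin (n-1)) (hij : (j:ℕ) = (i:ℕ) + 1)
    (w : List (Letter n)) (hw : w = A ++ [.zeta i, .zeta j, .zeta i] ++ B)
    (σ : Equiv.Perm (Fin n)) (hσ : σ = Qp * permOf w)
    (hcyc : σ.IsCycle) (hsupp : σ.support.card = n) :
    gaussParity w σ A.length + gaussParity w σ (A.length + 1)
      + gaussParity w σ (A.length + 2) = 0 :=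
  gaussian_r3_even_general n A B i j hij w hw σ

end OneTermBracket
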